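/- arXiv:2504.01720 — 7 statements merged into one kernel-verified Lean document; each statement's English description precedes it below -/
import Mathlib

section
/- For every input-erasing two-way general finite automaton M, there exists a linear grammar G such that L(G) = L(M). -/
namespace IETW

/-- An input-erasing two-way general finite automaton (IETWGFA). -/
structure GFA (T : Type) : Type 1 where
  Q : Type
  finQ : Finite Q
  start : Q
  accept : Set Q
  /-- Left rules: `(x, q, p)` represents `x q → p`. -/
  ruleL : Set (List T × Q × Q)
  /-- Right rules: `(q, x, p)` represents `q x → p`. -/
  ruleR : Set (Q × List T × Q)
  finL : ruleL.Finite
  finR : ruleR.Finite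

variable {T : Type}

/-- One move, labelled by its direction (`true` = left) and the number of erased symbols. -/
inductive GFA.Step (M : GFA T) :
    List T × M.Q × List T → Bool × ℕ → List T × M.Q × List T → Prop
  | left {u v x : List T} {q p : M.Q} (h : (x, q, p) ∈ M.ruleL) :
      GFA.Step M (u ++ x, q, v) (true, x.length) (u, p, v)
  | right {u v x : List T} {q p : M.Q} (h : (q, x, p) ∈ M.ruleR) :
      GFA.Step M (u, q, x ++ v) (false, x.length) (u, p, v)

/-- A computation along a list of move labels. -/
inductive GFA.Chain (M : GFA T) :
    List T × M.Q × List T → List (Bool × ℕ) → List T × M.Q × List T → Prop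
  | nil (c) : GFA.Chain M c [] c
  | cons {c c' c'' l ls} (h : GFA.Step M c l c') (h' : GFA.Chain M c' ls c'') :
      GFA.Chain M c (l :: ls) c''

/-- `L(M)`. -/
def GFA.lang (M : GFA T) : Set (List T) :=
  {w | ∃ x y ls f, w = x ++ y ∧ f ∈ M.accept ∧ M.Chain (x, M.start, y) ls ([], f, [])}

/-- The moves strictly alternate between left and right. -/
def Alternating (ls : List (Bool × ℕ)) : Prop :=
  ls.Chain' (fun a b => a.1 ≠ b.1)

/-- An even computation: alternating, of even length, and each odd-indexed move reads
the same number of symbols as the following move. -/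
def EvenTrace (ls : List (Bool × ℕ)) : Prop :=
  ls.length % 2 = 0 ∧ Alternating ls ∧
    ∀ i, 2 * i + 1 < ls.length →
      (ls.getD (2 * i) (true, 0)).2 = (ls.getD (2 * i + 1) (true, 0)).2

/-- An initialized even computation: one move followed by an even computation. -/
def InitEvenTrace (ls : List (Bool × ℕ)) : Prop :=
  ∃ l ls', ls = l :: ls' ∧ EvenTrace ls'

/-- `L(M)_alt`. -/
def GFA.langAlt (M : GFA T) : Set (List T) :=
  {w | ∃ x y ls f, w = x ++ y ∧ f ∈ M.accept ∧ Alternating ls ∧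
    M.Chain (x, M.start, y) ls ([], f, [])}

/-- `L(M)_even`. -/
def GFA.langEven (M : GFA T) : Set (List T) :=
  {w | ∃ x y ls f, w = x ++ y ∧ f ∈ M.accept ∧ EvenTrace ls ∧
    M.Chain (x, M.start, y) ls ([], f, [])}

/-- `L(M)_init-even`. -/
def GFA.langInitEven (M : GFA T) : Set (List T) :=
  {w | ∃ x y ls f, w = x ++ y ∧ f ∈ M.accept ∧ InitEvenTrace ls ∧
    M.Chain (x, M.start, y) ls ([], f, [])}

/-- All rules read at most one symbol (IETWSFA). -/
def GFA.Simple (M : GFA T) : Prop :=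
  (∀ r ∈ M.ruleL, r.1.length ≤ 1) ∧ (∀ r ∈ M.ruleR, r.2.1.length ≤ 1)

/-- No ε-rules: every rule reads at least one symbol. -/
def GFA.EpsFree (M : GFA T) : Prop :=
  (∀ r ∈ M.ruleL, r.1 ≠ ([] : List T)) ∧ (∀ r ∈ M.ruleR, r.2.1 ≠ ([] : List T))

/-- A linear grammar: rules `A → x B y` (encoded `(A, x, some (B, y))`)
or `A → x` (encoded `(A, x, none)`). -/
structure LG (T : Type) : Type 1 where
  N : Type
  finN : Finite N
  start : N
  rules : Set (N × List T × Option (N × List T))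
  finR : rules.Finite

/-- One derivation step on sentential forms `u A v`. -/
inductive LG.Der (G : LG T) :
    List T × G.N × List T → List T × G.N × List T → Prop
  | step {u v x y : List T} {A B : G.N} (h : (A, x, some (B, y)) ∈ G.rules) :
      LG.Der G (u, A, v) (u ++ x, B, y ++ v)

/-- `L(G)`. -/
def LG.lang (G : LG T) : Set (List T) :=
  {w | ∃ u A v x, Relation.ReflTransGen G.Der ([], G.start, []) (u, A, v) ∧
    (A, x, none) ∈ G.rules ∧ w = u ++ x ++ v}

/-- Even linear grammar: `|x| = |y|` in every rule `A → x B y`. -/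
def LG.Even (G : LG T) : Prop :=
  ∀ r ∈ G.rules, ∀ B (y : List T), r.2.2 = some (B, y) → r.2.1.length = y.length

/-! The grammar runs `M` backwards. Its nonterminals are a fresh start symbol together with the
states of `M`, and a sentential form `u q v` stands for the configuration `u q v`: a move
`x q ⇒ p` becomes the rule `p → x q`, a move `q x ⇒ p` the rule `p → q x`. A derivation opens
with `S → f` for an accepting state `f` and closes with `s → ε` at the start state `s`, so the
words it derives are exactly the `xy` with `x s y ⇒* f`. -/

namespace GFA

variable (M : GFA T)

def Accepts (c : List T × M.Q × List T) : Prop :=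
  ∃ ls, ∃ f ∈ M.accept, M.Chain c ls ([], f, [])

variable {M} in
theorem Accepts.of_step {c d : List T × M.Q × List T} {l : Bool × ℕ} (h : M.Step c l d)
    (hd : M.Accepts d) : M.Accepts c :=
  let ⟨ls, f, hf, hch⟩ := hd
  ⟨l :: ls, f, hf, .cons h hch⟩

inductive ReverseRule : Option M.Q × List T × Option (Option M.Q × List T) → Prop
  | accept {f : M.Q} (hf : f ∈ M.accept) : ReverseRule (none, [], some (some f, []))
  | left {x : List T} {q p : M.Q} (h : (x, q, p) ∈ M.ruleL) :
      ReverseRule (some p, x, some (some q, []))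
  | right {q p : M.Q} {x : List T} (h : (q, x, p) ∈ M.ruleR) :
      ReverseRule (some p, [], some (some q, x))
  | start : ReverseRule (some M.start, [], none)

theorem finite_reverseRule : {r | M.ReverseRule r}.Finite := by
  have := M.finQ
  refine ((((M.accept.toFinite.image fun f => (none, [], some (some f, []))).union
    (M.finL.image fun r => (some r.2.2, r.1, some (some r.2.1, [])))).union
    (M.finR.image fun r => (some r.2.2, [], some (some r.1, r.2.1)))).union
    (Set.finite_singleton (some M.start, [], none))).subset ?_
  rintro _ (⟨hf⟩ | ⟨h⟩ | ⟨h⟩ | _)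
  · exact .inl (.inl (.inl ⟨_, hf, rfl⟩))
  · exact .inl (.inl (.inr ⟨_, h, rfl⟩))
  · exact .inl (.inr ⟨_, h, rfl⟩)
  · exact .inr rfl

def reverseLG : LG T where
  N := Option M.Q
  finN := have := M.finQ; inferInstance
  start := none
  rules := {r | M.ReverseRule r}
  finR := M.finite_reverseRule

theorem reverseLG_der {u v x y : List T} {A B : Option M.Q}
    (h : M.ReverseRule (A, x, some (B, y))) : M.reverseLG.Der (u, A, v) (u ++ x, B, y ++ v) :=
  .step h

theorem reverseLG_der_of_step {c d : List T × M.Q × List T} {l : Bool × ℕ} (h : M.Step c l d) :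
    M.reverseLG.Der (d.1, some d.2.1, d.2.2) (c.1, some c.2.1, c.2.2) := by
  cases h with
  | left h => exact M.reverseLG_der (.left h)
  | @right u v _ _ _ h => simpa using M.reverseLG_der (u := u) (v := v) (.right h)

theorem reverseLG_reflTransGen_of_chain {c d : List T × M.Q × List T} {ls : List (Bool × ℕ)}
    (h : M.Chain c ls d) :
    Relation.ReflTransGen M.reverseLG.Der (d.1, some d.2.1, d.2.2) (c.1, some c.2.1, c.2.2) := by
  induction h with
  | nil => exact .refl
  | cons hstep _ ih => exact ih.tail (M.reverseLG_der_of_step hstep)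

theorem accepts_of_reverseLG_reflTransGen {c : List T × M.reverseLG.N × List T}
    (h : Relation.ReflTransGen M.reverseLG.Der ([], none, []) c) :
    (c.2.1 = none ∧ c.1 = [] ∧ c.2.2 = []) ∨ ∃ q, c.2.1 = some q ∧ M.Accepts (c.1, q, c.2.2) := by
  induction h with
  | refl => exact .inl ⟨rfl, rfl, rfl⟩
  | tail _ hstep ih =>
    rcases hstep with ⟨hr⟩
    -- the patterns `⟨⟩` on `some _ = none` and `none = some _` discard the impossible pairings
    rcases hr with hf | hl | hr <;> rcases ih with ⟨⟨⟩, rfl, rfl⟩ | ⟨q, ⟨⟩, hacc⟩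
    · exact .inr ⟨_, rfl, [], _, hf, .nil _⟩
    · exact .inr ⟨_, rfl, hacc.of_step (.left hl)⟩
    · exact .inr ⟨_, rfl, by simpa using hacc.of_step (.right hr)⟩

end GFA

theorem ietwgfa_to_lg {T : Type} (M : GFA T) : ∃ G : LG T, G.lang = M.lang := by
  refine ⟨M.reverseLG, Set.ext fun w => ⟨?_, ?_⟩⟩
  · rintro ⟨u, A, v, x, hder, ⟨⟩, rfl⟩
    rcases M.accepts_of_reverseLG_reflTransGen hder with ⟨⟨⟩, -, -⟩ | ⟨q, ⟨⟩, ls, f, hf, hch⟩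
    exact ⟨u, v, ls, f, by simp, hf, hch⟩
  · rintro ⟨x, y, ls, f, rfl, hf, hch⟩
    have hopen : M.reverseLG.Der ([], none, []) ([], some f, []) := M.reverseLG_der (.accept hf)
    exact ⟨x, some M.start, y, [], .head hopen (M.reverseLG_reflTransGen_of_chain hch),
      .start, by simp⟩

end IETW
end

section
/- For every linear grammar G, there exists an input-erasing two-way general finite automaton M such that L(M) = L(G). -/
namespace IETW

variable {T : Type}

/-!
The automaton runs a derivation `S ⇒* u A v ⇒ u x v` backwards. Started between `u x` and `v`,
it erases `x` on its left and enters `A`; it then undoes each rule `A → x B y` in two moves,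
erasing `x` on the left of `B` and then `y` on its right, which leads to `A`. It accepts in `S`
once the whole input is erased. Conversely, every configuration from which an accepting
configuration is reachable is of one of these shapes, so nothing else is accepted.
-/

theorem GFA.Chain.backward_invariant {M : GFA T} {P : List T × M.Q × List T → Prop}
    (hP : ∀ {c l c'}, M.Step c l c' → P c' → P c) {c ls c'} (h : M.Chain c ls c') (h' : P c') :
    P c := by
  induction h with
  | nil => exact h'
  | cons hstep _ ih => exact hP hstep (ih h')

namespace LG

variable (G : LG T)

def IsSententialForm (c : List T × G.N × List T) : Prop :=
  Relation.ReflTransGen G.Der ([], G.start, []) c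

/-- `none` is the initial state, `inl A` is the nonterminal `A`, and `inr r` is the middle of
undoing the rule `r = A → x B y`, after `x` has been erased. -/
abbrev RevState : Type := Option (G.N ⊕ G.rules)

def revLeft (r : G.rules) : List T × G.RevState × G.RevState :=
  match r with
  | ⟨(A, x, none), _⟩ => (x, none, some (.inl A))
  | ⟨(_, x, some (B, _)), _⟩ => (x, some (.inl B), some (.inr r))

def revRight (r : G.rules) : Option (G.RevState × List T × G.RevState) :=
  match r with
  | ⟨(_, _, none), _⟩ => none
  | ⟨(A, _, some (_, y)), _⟩ => some (some (.inr r), y, some (.inl A))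

def revGFA : GFA T where
  Q := G.RevState
  finQ := by
    have := G.finN
    have := G.finR.to_subtype
    infer_instance
  start := none
  accept := {some (.inl G.start)}
  ruleL := Set.range G.revLeft
  ruleR := some ⁻¹' Set.range G.revRight
  finL := by
    have := G.finR.to_subtype
    exact Set.finite_range _
  finR := by
    have := G.finR.to_subtype
    exact (Set.finite_range _).preimage (Option.some_injective _).injOn

/-- The configurations of `G.revGFA` from which it can accept. -/
def RevInvariant : List T × G.RevState × List T → Prop
  | (u, none, v) =>
      ∃ A x u', u = u' ++ x ∧ (A, x, none) ∈ G.rules ∧ G.IsSententialForm (u', A, v)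
  | (u, some (.inl A), v) => G.IsSententialForm (u, A, v)
  | (u, some (.inr ⟨(A, _, some (_, y)), _⟩), v) =>
      ∃ v', v = y ++ v' ∧ G.IsSententialForm (u, A, v')
  | (_, some (.inr ⟨(_, _, none), _⟩), _) => False

theorem revInvariant_of_step {c l c'} (h : G.revGFA.Step c l c') (h' : G.RevInvariant c') :
    G.RevInvariant c := by
  cases h with
  | left hr =>
    obtain ⟨⟨⟨A, x, _ | ⟨B, y⟩⟩, hr⟩, heq⟩ := hr <;> cases heq
    · exact ⟨A, _, _, rfl, hr, h'⟩
    · obtain ⟨v, rfl, hd⟩ := h'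
      exact hd.tail (.step hr)
  | right hr =>
    obtain ⟨⟨⟨A, x, _ | ⟨B, y⟩⟩, hr⟩, heq⟩ := hr <;> cases heq
    exact ⟨_, rfl, h'⟩

theorem exists_revGFA_chain_of_isSententialForm {c} (h : G.IsSententialForm c) :
    ∃ ls, G.revGFA.Chain (c.1, some (.inl c.2.1), c.2.2) ls ([], some (.inl G.start), []) := by
  induction h with
  | refl => exact ⟨[], .nil _⟩
  | tail _ hstep ih =>
    obtain @⟨u, v, x, y, A, B, hr⟩ := hstep
    obtain ⟨ls, hch⟩ := ih
    exact ⟨_, .cons (.left (x := x) ⟨⟨_, hr⟩, rfl⟩) (.cons (.right (x := y) ⟨⟨_, hr⟩, rfl⟩) hch)⟩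

end LG

theorem lg_to_ietwgfa {T : Type} (G : LG T) : ∃ M : GFA T, M.lang = G.lang := by
  refine ⟨G.revGFA, Set.ext fun w => ⟨?_, ?_⟩⟩
  · rintro ⟨x, y, ls, f, rfl, rfl, hch⟩
    obtain ⟨A, x', u, rfl, hr, hd⟩ := hch.backward_invariant G.revInvariant_of_step .refl
    exact ⟨u, A, y, x', hd, hr, by simp⟩
  · rintro ⟨u, A, v, x, hd, hr, rfl⟩
    obtain ⟨ls, hch⟩ := G.exists_revGFA_chain_of_isSententialForm hd
    exact ⟨u ++ x, v, _, _, by simp, rfl, .cons (.left (x := x) ⟨⟨_, hr⟩, rfl⟩) hch⟩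

end IETW
end

section
/- For every input-erasing two-way general finite automaton, there is an equivalent input-erasing two-way simple finite automaton; that is, the family of languages accepted by IETWGFAs equals the family accepted by IETWSFAs (automata whose every rule has left-hand side of length at most 2). -/
/-!
A rule `x q → p` of a general automaton is simulated by simple rules through new states
`(y, p)`, `y` a prefix of `x`: from `q` an ε-move enters `(x, p)`, each move `(y a, p) → (y, p)`
erases one symbol, and `([], p) → p` finishes. Right rules are handled symmetrically with
suffixes. There are finitely many such states. Conversely, read backwards from acceptance, every
configuration of an accepting run of the simple automaton stands for a configuration of the
original automaton from which it accepts.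
-/

namespace IETW

variable {T : Type}

open Relation

theorem _root_.List.finite_setOf_sublist {α : Type*} (x : List α) :
    {y : List α | y.Sublist x}.Finite :=
  x.sublists.finite_toSet.subset fun _ => List.mem_sublists.2

namespace GFA

attribute [instance] GFA.finQ

variable (M : GFA T)

def Move (a b : List T × M.Q × List T) : Prop := ∃ l, M.Step a l b

variable {M}

theorem Chain.reflTransGen {a b ls} (h : M.Chain a ls b) : ReflTransGen M.Move a b := by
  induction h with
  | nil => rfl
  | cons hs _ ih => exact .head ⟨_, hs⟩ ih

theorem exists_chain_of_reflTransGen {a b} (h : ReflTransGen M.Move a b) :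
    ∃ ls, M.Chain a ls b := by
  induction h using ReflTransGen.head_induction_on with
  | refl => exact ⟨[], .nil _⟩
  | head hab _ ih =>
    obtain ⟨l, hs⟩ := hab
    obtain ⟨ls, h⟩ := ih
    exact ⟨l :: ls, .cons hs h⟩

theorem mem_lang_iff {w : List T} : w ∈ M.lang ↔
    ∃ x y f, w = x ++ y ∧ f ∈ M.accept ∧
      ReflTransGen M.Move (x, M.start, y) ([], f, []) := by
  constructor
  · rintro ⟨x, y, _, f, rfl, hf, h⟩
    exact ⟨x, y, f, rfl, hf, h.reflTransGen⟩
  · rintro ⟨x, y, f, rfl, hf, h⟩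
    obtain ⟨ls, h⟩ := exists_chain_of_reflTransGen h
    exact ⟨x, y, ls, f, rfl, hf, h⟩

theorem move_of_mem_ruleL {x : List T} {q p : M.Q} (h : (x, q, p) ∈ M.ruleL)
    {w u v : List T} (hw : w = u ++ x) : M.Move (w, q, v) (u, p, v) := by
  subst hw; exact ⟨_, .left h⟩

theorem move_of_mem_ruleR {x : List T} {q p : M.Q} (h : (q, x, p) ∈ M.ruleR)
    {w u v : List T} (hw : w = x ++ v) : M.Move (u, q, w) (u, p, v) := by
  subst hw; exact ⟨_, .right h⟩

variable (M)

/-- `(y, p)` records that the simple automaton still has to erase `y` on the left of its head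
and then enter `p`; it is a pending part of a left rule `x q → p`. -/
def leftPending : Set (List T × M.Q) :=
  {d | ∃ x q, (x, q, d.2) ∈ M.ruleL ∧ d.1 <+: x}

def rightPending : Set (List T × M.Q) :=
  {d | ∃ q x, (q, x, d.2) ∈ M.ruleR ∧ d.1 <:+ x}

theorem leftPending_finite : M.leftPending.Finite := by
  refine (M.finL.biUnion fun r _ => (List.finite_setOf_sublist r.1).prod
    (Set.finite_singleton r.2.2)).subset ?_
  rintro ⟨y, p⟩ ⟨x, q, hr, hy⟩
  exact Set.mem_biUnion hr ⟨hy.sublist, rfl⟩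

theorem rightPending_finite : M.rightPending.Finite := by
  refine (M.finR.biUnion fun r _ => (List.finite_setOf_sublist r.2.1).prod
    (Set.finite_singleton r.2.2)).subset ?_
  rintro ⟨y, p⟩ ⟨q, x, hr, hy⟩
  exact Set.mem_biUnion hr ⟨hy.sublist, rfl⟩

instance : Finite M.leftPending := M.leftPending_finite.to_subtype

instance : Finite M.rightPending := M.rightPending_finite.to_subtype

variable {M}

theorem mem_leftPending_of_prefix {y z : List T} {p : M.Q} (h : (z, p) ∈ M.leftPending)
    (hyz : y <+: z) : (y, p) ∈ M.leftPending :=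
  let ⟨x, q, hr, hz⟩ := h; ⟨x, q, hr, hyz.trans hz⟩

theorem mem_rightPending_of_suffix {y z : List T} {p : M.Q} (h : (z, p) ∈ M.rightPending)
    (hyz : y <:+ z) : (y, p) ∈ M.rightPending :=
  let ⟨q, x, hr, hz⟩ := h; ⟨q, x, hr, hyz.trans hz⟩

variable (M)

abbrev SimpleState : Type := M.Q ⊕ (M.leftPending ⊕ M.rightPending)

inductive SimpleRuleL : List T × M.SimpleState × M.SimpleState → Prop
  | enter {x q p} (h : (x, q, p) ∈ M.ruleL) :
      SimpleRuleL ([], .inl q, .inr (.inl ⟨(x, p), x, q, h, List.prefix_refl x⟩))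
  | erase {y a p} (h : (y ++ [a], p) ∈ M.leftPending) :
      SimpleRuleL ([a], .inr (.inl ⟨(y ++ [a], p), h⟩),
        .inr (.inl ⟨(y, p), mem_leftPending_of_prefix h (List.prefix_append y [a])⟩))
  | exit {p} (h : ([], p) ∈ M.leftPending) :
      SimpleRuleL ([], .inr (.inl ⟨([], p), h⟩), .inl p)

inductive SimpleRuleR : M.SimpleState × List T × M.SimpleState → Prop
  | enter {q x p} (h : (q, x, p) ∈ M.ruleR) :
      SimpleRuleR (.inl q, [], .inr (.inr ⟨(x, p), q, x, h, List.suffix_refl x⟩))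
  | erase {a y p} (h : (a :: y, p) ∈ M.rightPending) :
      SimpleRuleR (.inr (.inr ⟨(a :: y, p), h⟩), [a],
        .inr (.inr ⟨(y, p), mem_rightPending_of_suffix h (List.suffix_cons a y)⟩))
  | exit {p} (h : ([], p) ∈ M.rightPending) :
      SimpleRuleR (.inr (.inr ⟨([], p), h⟩), [], .inl p)

theorem simpleRuleL_finite : {t | M.SimpleRuleL t}.Finite := by
  refine (((M.finL.biUnion fun r _ => List.finite_setOf_sublist r.1).insert []).prod
    Set.finite_univ).subset ?_
  rintro _ (_ | @⟨y, a, _, ⟨x, _, hr, hx⟩⟩ | _)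
  · exact ⟨.inl rfl, trivial⟩
  · exact ⟨.inr (Set.mem_biUnion hr ((List.sublist_append_right y [a]).trans hx.sublist)),
      trivial⟩
  · exact ⟨.inl rfl, trivial⟩

theorem simpleRuleR_finite : {t | M.SimpleRuleR t}.Finite := by
  refine (Set.finite_univ.prod (((M.finR.biUnion fun r _ =>
    List.finite_setOf_sublist r.2.1).insert []).prod Set.finite_univ)).subset ?_
  rintro _ (_ | @⟨a, y, _, ⟨_, x, hr, hx⟩⟩ | _)
  · exact ⟨trivial, .inl rfl, trivial⟩
  · exact ⟨trivial, .inr (Set.mem_biUnion hr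
      ((List.cons_sublist_cons.2 (List.nil_sublist y)).trans hx.sublist)), trivial⟩
  · exact ⟨trivial, .inl rfl, trivial⟩

abbrev toSimple : GFA T where
  Q := M.SimpleState
  finQ := inferInstance
  start := .inl M.start
  accept := .inl '' M.accept
  ruleL := {t | M.SimpleRuleL t}
  ruleR := {t | M.SimpleRuleR t}
  finL := M.simpleRuleL_finite
  finR := M.simpleRuleR_finite

theorem simple_toSimple : M.toSimple.Simple := by
  constructor
  · rintro _ (_ | _ | _) <;> simp
  · rintro _ (_ | _ | _) <;> simp

variable {M}

theorem reflTransGen_toSimple_erase_left (y : List T) {p : M.Q} (h : (y, p) ∈ M.leftPending)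
    (u v : List T) :
    ReflTransGen M.toSimple.Move (u ++ y, .inr (.inl ⟨(y, p), h⟩), v) (u, .inl p, v) := by
  induction y using List.reverseRecOn generalizing u with
  | nil => exact .single (move_of_mem_ruleL (M := M.toSimple) (SimpleRuleL.exit h) (by simp))
  | append_singleton y a ih =>
    exact .head (move_of_mem_ruleL (M := M.toSimple) (SimpleRuleL.erase h)
      (List.append_assoc ..).symm) (ih _ _)

theorem reflTransGen_toSimple_erase_right (y : List T) {p : M.Q} (h : (y, p) ∈ M.rightPending)
    (u v : List T) :
    ReflTransGen M.toSimple.Move (u, .inr (.inr ⟨(y, p), h⟩), y ++ v) (u, .inl p, v) := by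
  induction y with
  | nil => exact .single (move_of_mem_ruleR (M := M.toSimple) (SimpleRuleR.exit h) rfl)
  | cons a y ih =>
    exact .head (move_of_mem_ruleR (M := M.toSimple) (SimpleRuleR.erase h) rfl) (ih _)

theorem reflTransGen_toSimple_of_move {c d : List T × M.Q × List T} (h : M.Move c d) :
    ReflTransGen M.toSimple.Move (c.1, .inl c.2.1, c.2.2) (d.1, .inl d.2.1, d.2.2) := by
  obtain ⟨_, h | h⟩ := h
  · exact .head (move_of_mem_ruleL (M := M.toSimple) (SimpleRuleL.enter h) (by simp))
      (reflTransGen_toSimple_erase_left _ _ _ _)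
  · exact .head (move_of_mem_ruleR (M := M.toSimple) (SimpleRuleR.enter h) rfl)
      (reflTransGen_toSimple_erase_right _ _ _ _)

variable (M) in
/-- Runs are decoded backwards from acceptance: a run of `M.toSimple` may enter a pending state
that it cannot complete, but on an accepting run every configuration represents one of `M`. -/
inductive Represents : List T × M.SimpleState × List T → List T × M.Q × List T → Prop
  | base (u : List T) (q : M.Q) (v : List T) : Represents (u, .inl q, v) (u, q, v)
  | left (u y : List T) (p : M.Q) (h : (y, p) ∈ M.leftPending) (v : List T) :
      Represents (u ++ y, .inr (.inl ⟨(y, p), h⟩), v) (u, p, v)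
  | right (u y : List T) (p : M.Q) (h : (y, p) ∈ M.rightPending) (v : List T) :
      Represents (u, .inr (.inr ⟨(y, p), h⟩), y ++ v) (u, p, v)

theorem exists_represents_of_toSimple_move {c c' : List T × M.SimpleState × List T}
    {d' : List T × M.Q × List T} (hc : M.toSimple.Move c c') (hd' : M.Represents c' d') :
    ∃ d, M.Represents c d ∧ ReflTransGen M.Move d d' := by
  obtain ⟨_, hs⟩ := hc
  rcases hs with ⟨hr | hr | hr⟩ | ⟨hr | hr | hr⟩ <;> cases hd'
  · exact ⟨_, .base _ _ _, .single (move_of_mem_ruleL hr (by simp))⟩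
  · exact ⟨_, by simpa using Represents.left _ _ _ hr _, .refl⟩
  · exact ⟨_, by simpa using Represents.left _ _ _ hr _, .refl⟩
  · exact ⟨_, .base _ _ _, .single (move_of_mem_ruleR hr rfl)⟩
  · exact ⟨_, by simpa using Represents.right _ _ _ hr _, .refl⟩
  · exact ⟨_, by simpa using Represents.right _ _ _ hr _, .refl⟩

theorem exists_represents_of_reflTransGen_toSimple {c c' : List T × M.SimpleState × List T}
    {d' : List T × M.Q × List T} (hc : ReflTransGen M.toSimple.Move c c')
    (hd' : M.Represents c' d') : ∃ d, M.Represents c d ∧ ReflTransGen M.Move d d' := by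
  induction hc using ReflTransGen.head_induction_on generalizing d' with
  | refl => exact ⟨d', hd', .refl⟩
  | head hcb _ ih =>
    obtain ⟨d'', hd'', hreach⟩ := ih hd'
    obtain ⟨d, hd, hreach'⟩ := exists_represents_of_toSimple_move hcb hd''
    exact ⟨d, hd, hreach'.trans hreach⟩

variable (M) in
theorem lang_toSimple : M.toSimple.lang = M.lang := by
  ext w
  simp only [mem_lang_iff]
  constructor
  · rintro ⟨x, y, _, rfl, ⟨f, hf, rfl⟩, h⟩
    obtain ⟨d, hd, hreach⟩ := exists_represents_of_reflTransGen_toSimple h (.base [] f [])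
    cases hd
    exact ⟨x, y, f, rfl, hf, hreach⟩
  · rintro ⟨x, y, f, rfl, hf, h⟩
    exact ⟨x, y, .inl f, rfl, ⟨f, hf, rfl⟩,
      h.lift' _ fun _ _ => reflTransGen_toSimple_of_move⟩

end GFA

theorem ietwgfa_family_eq_ietwsfa (T : Type) :
    {L : Set (List T) | ∃ M : GFA T, M.lang = L} =
      {L : Set (List T) | ∃ M : GFA T, M.Simple ∧ M.lang = L} := by
  ext L
  constructor
  · rintro ⟨M, rfl⟩
    exact ⟨M.toSimple, M.simple_toSimple, M.lang_toSimple⟩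
  · rintro ⟨M, -, rfl⟩
    exact ⟨M, rfl⟩

end IETW
end

section
/- Every input-erasing two-way simple finite automaton with ε-rules can be simulated by an ε-free one: the family of languages accepted by IETWSFAs equals the family accepted by ε-free IETWSFAs. -/
namespace IETW

variable {T : Type}

/-! The ε-free automaton keeps the states of `M` and replaces every reading rule `q' x → p` by
`q x → p` for each `q` from which `q'` is reachable by ε-moves; a state becomes accepting if an
accepting state is ε-reachable from it. Since ε-moves do not touch the tapes, a computation of `M`
is a computation of the new automaton in which each maximal block of ε-moves is absorbed into the
next reading move, or, at the end, into acceptance. -/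

namespace GFA

variable {M : GFA T}

def EpsStep (M : GFA T) (q p : M.Q) : Prop :=
  ([], q, p) ∈ M.ruleL ∨ (q, [], p) ∈ M.ruleR

def EpsReach (M : GFA T) : M.Q → M.Q → Prop :=
  Relation.ReflTransGen M.EpsStep

theorem Chain.append {a b c : List T × M.Q × List T} {ls ls' : List (Bool × ℕ)}
    (h : M.Chain a ls b) (h' : M.Chain b ls' c) : M.Chain a (ls ++ ls') c := by
  induction h with
  | nil => exact h'
  | cons hs _ ih => exact .cons hs (ih h')

theorem EpsReach.chain {q p : M.Q} (h : M.EpsReach q p) (x y : List T) :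
    ∃ ls, M.Chain (x, q, y) ls (x, p, y) := by
  induction h using Relation.ReflTransGen.head_induction_on with
  | refl => exact ⟨[], .nil _⟩
  | head e _ ih =>
    obtain ⟨ls, hc⟩ := ih
    rcases e with hL | hR
    · have s := Step.left (M := M) (u := x) (v := y) hL
      rw [List.append_nil] at s
      exact ⟨_, .cons s hc⟩
    · have s := Step.right (M := M) (u := x) (v := y) hR
      rw [List.nil_append] at s
      exact ⟨_, .cons s hc⟩

def epsElimRuleL (M : GFA T) : Set (List T × M.Q × M.Q) :=
  {r | r.1 ≠ [] ∧ ∃ q', M.EpsReach r.2.1 q' ∧ (r.1, q', r.2.2) ∈ M.ruleL}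

def epsElimRuleR (M : GFA T) : Set (M.Q × List T × M.Q) :=
  {r | r.2.1 ≠ [] ∧ ∃ q', M.EpsReach r.1 q' ∧ (q', r.2.1, r.2.2) ∈ M.ruleR}

theorem finite_epsElimRuleL (M : GFA T) : M.epsElimRuleL.Finite := by
  have := M.finQ
  refine ((M.finL.prod Set.finite_univ).image
    fun p : (List T × M.Q × M.Q) × M.Q => (p.1.1, p.2, p.1.2.2)).subset ?_
  rintro ⟨x, q, p⟩ ⟨-, q', -, hr⟩
  exact ⟨((x, q', p), q), ⟨hr, trivial⟩, rfl⟩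

theorem finite_epsElimRuleR (M : GFA T) : M.epsElimRuleR.Finite := by
  have := M.finQ
  refine ((M.finR.prod Set.finite_univ).image
    fun p : (M.Q × List T × M.Q) × M.Q => (p.2, p.1.2.1, p.1.2.2)).subset ?_
  rintro ⟨q, x, p⟩ ⟨-, q', -, hr⟩
  exact ⟨((q', x, p), q), ⟨hr, trivial⟩, rfl⟩

def epsElim (M : GFA T) : GFA T where
  Q := M.Q
  finQ := M.finQ
  start := M.start
  accept := {q | ∃ f ∈ M.accept, M.EpsReach q f}
  ruleL := M.epsElimRuleL
  ruleR := M.epsElimRuleR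
  finL := M.finite_epsElimRuleL
  finR := M.finite_epsElimRuleR

theorem Simple.epsElim (hM : M.Simple) : M.epsElim.Simple :=
  ⟨fun r ⟨_, q', _, hr⟩ => hM.1 (r.1, q', r.2.2) hr,
    fun r ⟨_, q', _, hr⟩ => hM.2 (q', r.2.1, r.2.2) hr⟩

theorem epsFree_epsElim (M : GFA T) : M.epsElim.EpsFree :=
  ⟨fun _ hr => hr.1, fun _ hr => hr.1⟩

theorem Chain.of_epsElim {c d : List T × M.epsElim.Q × List T} {ls : List (Bool × ℕ)}
    (h : M.epsElim.Chain c ls d) : ∃ ls', M.Chain c ls' d := by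
  induction h with
  | nil => exact ⟨[], .nil _⟩
  | cons hs _ ih =>
    obtain ⟨ls', hc⟩ := ih
    cases hs with
    | left hr =>
      obtain ⟨-, q', hq, hrule⟩ := hr
      obtain ⟨_, hc₀⟩ := hq.chain _ _
      exact ⟨_, hc₀.append (.cons (.left hrule) hc)⟩
    | right hr =>
      obtain ⟨-, q', hq, hrule⟩ := hr
      obtain ⟨_, hc₀⟩ := hq.chain _ _
      exact ⟨_, hc₀.append (.cons (.right hrule) hc)⟩

theorem Chain.epsElim_of_epsReach {q p g : M.Q} {x y u v : List T} {ls : List (Bool × ℕ)}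
    (hqp : M.EpsReach q p) (h : M.epsElim.Chain (x, p, y) ls (u, g, v)) :
    ∃ ls' g', M.epsElim.Chain (x, q, y) ls' (u, g', v) ∧ M.EpsReach g' g := by
  cases h with
  | nil => exact ⟨[], q, .nil _, hqp⟩
  | cons hs hc =>
    cases hs with
    | left hr =>
      obtain ⟨hne, p', hp, hrule⟩ := hr
      exact ⟨_, g, .cons (.left (M := M.epsElim) ⟨hne, p', hqp.trans hp, hrule⟩) hc, .refl⟩
    | right hr =>
      obtain ⟨hne, p', hp, hrule⟩ := hr
      exact ⟨_, g, .cons (.right (M := M.epsElim) ⟨hne, p', hqp.trans hp, hrule⟩) hc, .refl⟩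

theorem Chain.epsElim {c : List T × M.Q × List T} {u v : List T} {f : M.Q}
    {ls : List (Bool × ℕ)} (h : M.Chain c ls (u, f, v)) :
    ∃ ls' g, M.epsElim.Chain c ls' (u, g, v) ∧ M.EpsReach g f := by
  generalize hd : (u, f, v) = d at h
  induction h with
  | nil => subst hd; exact ⟨[], f, .nil _, .refl⟩
  | cons hs _ ih =>
    obtain ⟨ls', g, hc, hgf⟩ := ih hd
    cases hs with
    | @left _ _ z q _ hr =>
      rcases eq_or_ne z [] with rfl | hne
      · rw [List.append_nil]
        obtain ⟨ls'', g', hc', hg'g⟩ := hc.epsElim_of_epsReach (.single (.inl hr))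
        exact ⟨ls'', g', hc', hg'g.trans hgf⟩
      · exact ⟨_, g, .cons (.left (M := M.epsElim) ⟨hne, q, .refl, hr⟩) hc, hgf⟩
    | @right _ _ z q _ hr =>
      rcases eq_or_ne z [] with rfl | hne
      · rw [List.nil_append]
        obtain ⟨ls'', g', hc', hg'g⟩ := hc.epsElim_of_epsReach (.single (.inr hr))
        exact ⟨ls'', g', hc', hg'g.trans hgf⟩
      · exact ⟨_, g, .cons (.right (M := M.epsElim) ⟨hne, q, .refl, hr⟩) hc, hgf⟩

theorem lang_epsElim (M : GFA T) : M.epsElim.lang = M.lang := by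
  ext w
  constructor
  · rintro ⟨x, y, ls, g, rfl, ⟨f, hf, hgf⟩, hc⟩
    obtain ⟨ls', hc'⟩ := hc.of_epsElim
    obtain ⟨_, hc₀⟩ := hgf.chain [] []
    exact ⟨x, y, _, f, rfl, hf, hc'.append hc₀⟩
  · rintro ⟨x, y, ls, f, rfl, hf, hc⟩
    obtain ⟨ls', g, hc', hgf⟩ := hc.epsElim
    exact ⟨x, y, ls', g, rfl, ⟨f, hf, hgf⟩, hc'⟩

end GFA

theorem ietwsfa_family_eq_epsfree (T : Type) :
    {L : Set (List T) | ∃ M : GFA T, M.Simple ∧ M.lang = L} =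
      {L : Set (List T) | ∃ M : GFA T, M.Simple ∧ M.EpsFree ∧ M.lang = L} := by
  ext L
  constructor
  · rintro ⟨M, hM, rfl⟩
    exact ⟨M.epsElim, hM.epsElim, M.epsFree_epsElim, M.lang_epsElim⟩
  · rintro ⟨M, hM, -, rfl⟩
    exact ⟨M, hM, rfl⟩

end IETW
end

section
/- The language L = {aⁿbⁿcᵐ | n, m ≥ 0} is accepted by some IETWSFA under alternating computation, but is not accepted by any ε-free IETWSFA under alternating computation; hence the family of languages accepted by ε-free IETWSFAs under alternating computation is strictly contained in that accepted by general IETWSFAs under alternating computation. -/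
namespace IETW

variable {T : Type}

/-- The language `{aⁿbⁿcᵐ | n, m ≥ 0}` over the three-letter alphabet `Fin 3`. -/
def abcLang : Set (List (Fin 3)) :=
  {w : List (Fin 3) | ∃ n m : ℕ, w = List.replicate n (0 : Fin 3) ++ List.replicate n (1 : Fin 3) ++ List.replicate m (2 : Fin 3)}

/-!
In an ε-free simple automaton every move erases exactly one symbol, so an alternating run has
erased `t` symbols on each side after `2t` moves. Feed it `aⁿbⁿc²ⁿ` with `n` the number of
states: the run erases `aⁿbⁿ` from the left and `c²ⁿ` from the right, and its states after
`0, 2, …, 2n` moves repeat, at `2i < 2j` say. A run depends only on what it erases, so cutting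
the `j - i` symbols `b` and `c` erased between these two moments leaves an accepting alternating
run on a word with fewer `b`s than `a`s. With ε-moves the head can instead wait on the left while
the `c`s are read on the right.
-/

namespace Alternating

variable {ls : List (Bool × ℕ)}

lemma take (h : Alternating ls) (k : ℕ) : Alternating (ls.take k) := List.IsChain.take h k

lemma drop (h : Alternating ls) (k : ℕ) : Alternating (ls.drop k) := List.IsChain.drop h k

lemma countP_fst_eq : ∀ {ls : List (Bool × ℕ)}, Alternating ls → Even ls.length →
    ls.countP (·.1) = ls.countP (!·.1)
  | [], _, _ => rfl
  | [_], _, he => by simp at he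
  | a :: b :: t, h, he => by
    have hab : a.1 ≠ b.1 := (List.isChain_cons_cons.1 h).1
    have ih := countP_fst_eq (h.drop 2) (by simpa [Nat.even_add_one] using he)
    simp only [List.drop_succ_cons, List.drop_zero] at ih
    rcases a with ⟨_ | _, _⟩ <;> rcases b with ⟨_ | _, _⟩ <;> simp_all

lemma fst_getElem_eq_iff (h : Alternating ls) :
    ∀ i (hi : i < ls.length), ls[i].1 = ls[0].1 ↔ Even i
  | 0, _ => by simp
  | i + 1, hi => by
    have hne : ls[i].1 ≠ ls[i + 1].1 := List.isChain_iff_getElem.1 h i hi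
    rw [Nat.even_add_one, ← fst_getElem_eq_iff h i (by omega)]
    revert hne
    cases ls[i].1 <;> cases ls[i + 1].1 <;> cases ls[0].1 <;> simp

lemma take_append_drop (h : Alternating ls) {i j : ℕ} (hij : i ≤ j) (hi : Even i)
    (hj : Even j) : Alternating (ls.take i ++ ls.drop j) := by
  refine (h.take i).append (h.drop j) fun a ha b hb => ?_
  rw [List.head?_drop] at hb
  rw [List.getLast?_take] at ha
  split_ifs at ha with hi0
  · simp at ha
  obtain ⟨hjl, rfl⟩ := List.getElem?_eq_some_iff.1 hb
  rw [List.getElem?_eq_getElem (by omega), Option.some_or, Option.mem_some_iff] at ha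
  subst ha
  intro hab
  have hodd := (h.fst_getElem_eq_iff (i - 1) (by omega)).1
    (hab.trans ((h.fst_getElem_eq_iff j hjl).2 hj))
  rcases hi with ⟨k, rfl⟩
  rcases hodd with ⟨k', hk'⟩
  omega

end Alternating

namespace GFA

variable {M : GFA T}

lemma Chain.append_s5 {c c' c'' : List T × M.Q × List T} {ls₁ ls₂ : List (Bool × ℕ)}
    (h₁ : M.Chain c ls₁ c') (h₂ : M.Chain c' ls₂ c'') : M.Chain c (ls₁ ++ ls₂) c'' := by
  induction h₁ with
  | nil => exact h₂
  | cons hs _ ih => exact .cons hs (ih h₂)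

lemma Chain.exists_of_append {ls₁ ls₂ : List (Bool × ℕ)} :
    ∀ {c c'' : List T × M.Q × List T}, M.Chain c (ls₁ ++ ls₂) c'' →
      ∃ c', M.Chain c ls₁ c' ∧ M.Chain c' ls₂ c'' := by
  induction ls₁ with
  | nil => exact fun h => ⟨_, .nil _, h⟩
  | cons l ls₁ ih =>
    rintro c c'' (_ | ⟨hs, h⟩)
    obtain ⟨c', h₁, h₂⟩ := ih h
    exact ⟨c', .cons hs h₁, h₂⟩

lemma Step.frame {c c' : List T × M.Q × List T} {l : Bool × ℕ} (h : M.Step c l c')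
    (u v : List T) : M.Step (u ++ c.1, c.2.1, c.2.2 ++ v) l (u ++ c'.1, c'.2.1, c'.2.2 ++ v) := by
  cases h with
  | left hr => simpa only [← List.append_assoc] using Step.left hr
  | right hr => simpa only [List.append_assoc] using Step.right hr

lemma Chain.frame {c c' : List T × M.Q × List T} {ls : List (Bool × ℕ)} (h : M.Chain c ls c')
    (u v : List T) : M.Chain (u ++ c.1, c.2.1, c.2.2 ++ v) ls (u ++ c'.1, c'.2.1, c'.2.2 ++ v) := by
  induction h with
  | nil => exact .nil _
  | cons hs _ ih => exact .cons (hs.frame u v) ih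

lemma Chain.cons_left_right {x z u v : List T} {q p r : M.Q} {ls : List (Bool × ℕ)}
    {c : List T × M.Q × List T} (h : M.Chain (u, r, v) ls c) (hl : (x, q, p) ∈ M.ruleL)
    (hr : (p, z, r) ∈ M.ruleR) :
    M.Chain (u ++ x, q, z ++ v) ((true, x.length) :: (false, z.length) :: ls) c :=
  .cons (.left hl) (.cons (.right hr) h)

lemma Chain.exists_erased {c c' : List T × M.Q × List T} {ls : List (Bool × ℕ)}
    (h : M.Chain c ls c') : ∃ u v, c.1 = c'.1 ++ u ∧ c.2.2 = v ++ c'.2.2 ∧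
      M.Chain (u, c.2.1, v) ls ([], c'.2.1, []) := by
  induction h with
  | nil => exact ⟨[], [], by simp, by simp, .nil _⟩
  | cons hs _ ih =>
    obtain ⟨u, v, hu, hv, h⟩ := ih
    cases hs with
    | @left _ _ x _ _ hr =>
      simp only at hu hv h
      exact ⟨u ++ x, v, by rw [hu, List.append_assoc], hv, .cons (.left hr) h⟩
    | @right _ _ x _ _ hr =>
      simp only at hu hv h
      exact ⟨u, x ++ v, hu, by rw [hv, List.append_assoc], .cons (.right hr) h⟩

lemma Step.length_eq (hS : M.Simple) (hE : M.EpsFree) {c c' : List T × M.Q × List T}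
    {l : Bool × ℕ} (h : M.Step c l c') :
    c.1.length = c'.1.length + (if l.1 then 1 else 0) ∧
      c.2.2.length = c'.2.2.length + (if l.1 then 0 else 1) := by
  cases h with
  | @left _ _ x _ _ hr =>
    have : 0 < x.length := List.length_pos_iff.2 (hE.1 _ hr)
    have : x.length ≤ 1 := hS.1 _ hr
    simp only [List.length_append, if_true]
    omega
  | @right _ _ x _ _ hr =>
    have : 0 < x.length := List.length_pos_iff.2 (hE.2 _ hr)
    have : x.length ≤ 1 := hS.2 _ hr
    simp only [List.length_append, Bool.false_eq_true, if_false]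
    omega

lemma Chain.length_eq_countP (hS : M.Simple) (hE : M.EpsFree) {c c' : List T × M.Q × List T}
    {ls : List (Bool × ℕ)} (h : M.Chain c ls c') :
    c.1.length = c'.1.length + ls.countP (·.1) ∧
      c.2.2.length = c'.2.2.length + ls.countP (!·.1) := by
  induction h with
  | nil => simp
  | cons hs _ ih =>
    obtain ⟨h₁, h₂⟩ := hs.length_eq hS hE
    simp only [List.countP_cons, Bool.not_eq_true'] at *
    split_ifs at * <;> simp_all <;> omega

lemma Chain.exists_split_balanced (hS : M.Simple) (hE : M.EpsFree) {x y : List T} {q : M.Q}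
    {c : List T × M.Q × List T} {ls : List (Bool × ℕ)} (h : M.Chain (x, q, y) ls c)
    (ha : Alternating ls) {t : ℕ} (ht : 2 * t ≤ ls.length) :
    ∃ p, M.Chain (x.drop (x.length - t), q, y.take t) (ls.take (2 * t)) ([], p, []) ∧
      M.Chain (x.take (x.length - t), p, y.drop t) (ls.drop (2 * t)) c := by
  rw [← List.take_append_drop (2 * t) ls] at h
  obtain ⟨⟨x', p, y'⟩, h₁, h₂⟩ := Chain.exists_of_append h
  obtain ⟨u, v, rfl, rfl, hcore⟩ := h₁.exists_erased
  have hlen := hcore.length_eq_countP hS hE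
  have hbal := (ha.take (2 * t)).countP_fst_eq (by simp [ht])
  have htot := List.length_eq_countP_add_countP (·.1) (l := ls.take (2 * t))
  simp only [List.length_take, List.length_nil, zero_add, Bool.not_eq_true,
    Bool.decide_eq_false] at hlen htot
  have hu : u.length = t := by omega
  have hv : v.length = t := by omega
  refine ⟨p, ?_, ?_⟩ <;> simpa [hu, hv]

theorem Chain.pump_down (hS : M.Simple) (hE : M.EpsFree) {x y : List T} {q : M.Q}
    {c : List T × M.Q × List T} {ls : List (Bool × ℕ)} (h : M.Chain (x, q, y) ls c)
    (ha : Alternating ls) {N : ℕ} (hN : Nat.card M.Q ≤ N) (hls : 2 * N ≤ ls.length) :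
    ∃ i j, i < j ∧ j ≤ N ∧ ∃ ls', Alternating ls' ∧
      M.Chain (x.take (x.length - j) ++ x.drop (x.length - i), q, y.take i ++ y.drop j) ls' c := by
  have hsplit (t : Fin (N + 1)) := h.exists_split_balanced hS hE ha (t := t) (by omega)
  choose p hp₁ hp₂ using hsplit
  have := M.finQ
  have := Fintype.ofFinite M.Q
  obtain ⟨i, j, hne, hij⟩ := Fintype.exists_ne_map_eq_of_card_lt p
    (by rw [Fintype.card_fin, Fintype.card_eq_nat_card]; omega)
  wlog hlt : i < j generalizing i j
  · exact this j i hne.symm hij.symm (lt_of_le_of_ne (not_lt.1 hlt) hne.symm)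
  refine ⟨i, j, hlt, by omega, ls.take (2 * i) ++ ls.drop (2 * j),
    ha.take_append_drop (by omega) (even_two_mul _) (even_two_mul _), ?_⟩
  have hpre := (hp₁ i).frame (x.take (x.length - j)) (y.drop j)
  simp only [List.append_nil, List.nil_append, hij] at hpre
  exact hpre.append_s5 (hp₂ j)

end GFA

/-- Accepting runs on `aⁿbⁿcᵐ` are `(a q₀ → q₁, q₁ b → q₀)ⁿ` followed, if `m > 0`, by
`(ε q₀ → q₂, q₂ c → q₃)` and `(ε q₃ → q₂, q₂ c → q₃)ᵐ⁻¹`; state `q₃` forbids returning to the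
`a`/`b` phase. -/
abbrev abcAutomaton : GFA (Fin 3) where
  Q := Fin 4
  finQ := inferInstance
  start := 0
  accept := {0, 3}
  ruleL := {([0], 0, 1), ([], 0, 2), ([], 3, 2)}
  ruleR := {(1, [1], 0), (2, [2], 3)}
  finL := ((Set.finite_singleton _).insert _).insert _
  finR := (Set.finite_singleton _).insert _

lemma abcAutomaton_simple : abcAutomaton.Simple := by
  constructor <;> rintro r hr <;> simp only [Set.mem_insert_iff, Set.mem_singleton_iff] at hr <;>
    rcases hr with rfl | rfl | rfl <;> simp

def abcInv : Fin 4 → List (Fin 3) → List (Fin 3) → Prop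
  | 0, x, y => ∃ n m, x = List.replicate n 0 ∧ y = List.replicate n 1 ++ List.replicate m 2
  | 1, x, y => ∃ n m, x = List.replicate n 0 ∧ y = List.replicate (n + 1) 1 ++ List.replicate m 2
  | 2, x, y => x = [] ∧ ∃ m, y = List.replicate (m + 1) 2
  | 3, x, y => x = [] ∧ ∃ m, y = List.replicate m 2

lemma abcInv_of_step {c c' : List (Fin 3) × abcAutomaton.Q × List (Fin 3)} {l : Bool × ℕ}
    (h : abcAutomaton.Step c l c') (h' : abcInv c'.2.1 c'.1 c'.2.2) : abcInv c.2.1 c.1 c.2.2 := by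
  cases h with
  | left hr =>
    simp only [abcAutomaton, Set.mem_insert_iff, Set.mem_singleton_iff, Prod.mk.injEq] at hr
    rcases hr with ⟨rfl, rfl, rfl⟩ | ⟨rfl, rfl, rfl⟩ | ⟨rfl, rfl, rfl⟩
    · obtain ⟨n, m, rfl, rfl⟩ := h'
      exact ⟨n + 1, m, List.replicate_succ'.symm, rfl⟩
    · obtain ⟨rfl, m, rfl⟩ := h'
      exact ⟨0, m + 1, rfl, rfl⟩
    · obtain ⟨rfl, m, rfl⟩ := h'
      exact ⟨rfl, m + 1, rfl⟩
  | right hr =>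
    simp only [abcAutomaton, Set.mem_insert_iff, Set.mem_singleton_iff, Prod.mk.injEq] at hr
    rcases hr with ⟨rfl, rfl, rfl⟩ | ⟨rfl, rfl, rfl⟩
    · obtain ⟨n, m, rfl, rfl⟩ := h'
      exact ⟨n, m, rfl, by simp [List.replicate_succ]⟩
    · obtain ⟨rfl, m, rfl⟩ := h'
      exact ⟨rfl, m, by simp [List.replicate_succ]⟩

lemma abcInv_of_chain {c c' : List (Fin 3) × abcAutomaton.Q × List (Fin 3)} {ls : List (Bool × ℕ)}
    (h : abcAutomaton.Chain c ls c') (h' : abcInv c'.2.1 c'.1 c'.2.2) : abcInv c.2.1 c.1 c.2.2 := by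
  induction h with
  | nil => exact h'
  | cons hs _ ih => exact abcInv_of_step hs (ih h')

def leftRightTrace (ks : List (ℕ × ℕ)) : List (Bool × ℕ) :=
  ks.flatMap fun k => [(true, k.1), (false, k.2)]

lemma alternating_leftRightTrace : ∀ ks : List (ℕ × ℕ), Alternating (leftRightTrace ks)
  | [] => List.isChain_nil
  | k :: ks => by
    refine List.isChain_cons_cons.2 ⟨by simp, List.isChain_cons.2
      ⟨?_, alternating_leftRightTrace ks⟩⟩
    cases ks <;> simp

lemma abcAutomaton_chain_ab (y : List (Fin 3)) : ∀ n,
    abcAutomaton.Chain (List.replicate n 0, (0 : Fin 4), List.replicate n 1 ++ y)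
      (leftRightTrace (List.replicate n (1, 1))) ([], 0, y)
  | 0 => .nil _
  | n + 1 => by
    have := (abcAutomaton_chain_ab y n).cons_left_right (x := [0]) (q := (0 : Fin 4))
      (p := (1 : Fin 4)) (z := [1]) (by simp) (by simp)
    rw [List.replicate_succ' (a := (0 : Fin 3)), List.replicate_succ (a := (1 : Fin 3)),
      List.replicate_succ (a := ((1, 1) : ℕ × ℕ))]
    exact this

lemma abcAutomaton_chain_c {q : Fin 4} (hq : q = 0 ∨ q = 3) : ∀ m,
    abcAutomaton.Chain ([], q, List.replicate (m + 1) 2)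
      (leftRightTrace (List.replicate (m + 1) (0, 1))) ([], 3, [])
  | 0 => by
    have := (GFA.Chain.nil (M := abcAutomaton) ([], 3, [])).cons_left_right (x := []) (q := q)
      (p := (2 : Fin 4)) (z := [2]) (by rcases hq with rfl | rfl <;> simp) (by simp)
    simpa [leftRightTrace] using this
  | m + 1 => by
    have := (abcAutomaton_chain_c (Or.inr rfl) m).cons_left_right (x := []) (q := q)
      (p := (2 : Fin 4)) (z := [2]) (by rcases hq with rfl | rfl <;> simp) (by simp)
    simpa [leftRightTrace, List.replicate_succ (n := m + 1)] using this

theorem abcAutomaton_langAlt : abcAutomaton.langAlt = abcLang := by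
  ext w
  constructor
  · rintro ⟨x, y, ls, f, rfl, hf, -, h⟩
    have hfinal : abcInv f [] [] := by
      rcases hf with rfl | rfl
      exacts [⟨0, 0, rfl, rfl⟩, ⟨rfl, 0, rfl⟩]
    obtain ⟨n, m, rfl, rfl⟩ := abcInv_of_chain h hfinal
    exact ⟨n, m, (List.append_assoc _ _ _).symm⟩
  · rintro ⟨n, m, rfl⟩
    rcases m with _ | m
    · exact ⟨_, _, _, 0, by simp, by simp, alternating_leftRightTrace _, abcAutomaton_chain_ab [] n⟩
    · refine ⟨_, _, leftRightTrace (List.replicate n (1, 1) ++ List.replicate (m + 1) (0, 1)), 3,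
        List.append_assoc _ _ _, by simp, alternating_leftRightTrace _, ?_⟩
      rw [leftRightTrace, List.flatMap_append]
      exact (abcAutomaton_chain_ab _ n).append_s5 (abcAutomaton_chain_c (Or.inl rfl) m)

lemma count_zero_eq_count_one_of_mem_abcLang {w : List (Fin 3)} (hw : w ∈ abcLang) :
    w.count 0 = w.count 1 := by
  obtain ⟨n, m, rfl⟩ := hw
  simp [List.count_replicate]

theorem not_exists_epsFree_langAlt_eq_abcLang :
    ¬ ∃ M : GFA (Fin 3), M.Simple ∧ M.EpsFree ∧ M.langAlt = abcLang := by
  rintro ⟨M, hS, hE, hL⟩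
  set n := Nat.card M.Q
  obtain ⟨x, y, ls, f, hw, hf, ha, h⟩ :
      List.replicate n 0 ++ List.replicate n 1 ++ List.replicate (2 * n) 2 ∈ M.langAlt :=
    hL ▸ ⟨n, 2 * n, rfl⟩
  have hlen := h.length_eq_countP hS hE
  have htot := List.length_eq_countP_add_countP (·.1) (l := ls)
  have hwlen := congrArg List.length hw
  simp only [List.length_nil, zero_add, Bool.not_eq_true, Bool.decide_eq_false,
    List.length_append, List.length_replicate] at hlen htot hwlen
  have hbal := ha.countP_fst_eq ⟨2 * n, by omega⟩
  obtain ⟨rfl, rfl⟩ := List.append_inj hw.symm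
    (by simp only [List.length_append, List.length_replicate]; omega)
  obtain ⟨i, j, hij, hjn, ls', ha', h'⟩ := h.pump_down hS hE ha le_rfl (by omega)
  have hcount := count_zero_eq_count_one_of_mem_abcLang
    (by rw [← hL]; exact ⟨_, _, _, f, rfl, hf, ha', h'⟩)
  simp [List.count_replicate, List.take_append, List.drop_append] at hcount
  omega

theorem alt_epsfree_strict :
    (∃ M : GFA (Fin 3), M.Simple ∧ M.langAlt = abcLang) ∧
    (¬ ∃ M : GFA (Fin 3), M.Simple ∧ M.EpsFree ∧ M.langAlt = abcLang) ∧
    {L : Set (List (Fin 3)) | ∃ M : GFA (Fin 3), M.Simple ∧ M.EpsFree ∧ M.langAlt = L} ⊂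
      {L : Set (List (Fin 3)) | ∃ M : GFA (Fin 3), M.Simple ∧ M.langAlt = L} := by
  have habc : ∃ M : GFA (Fin 3), M.Simple ∧ M.langAlt = abcLang :=
    ⟨abcAutomaton, abcAutomaton_simple, abcAutomaton_langAlt⟩
  refine ⟨habc, not_exists_epsFree_langAlt_eq_abcLang,
    fun L ⟨M, hS, _, hL⟩ => ⟨M, hS, hL⟩, fun hsub => ?_⟩
  obtain ⟨M, hS, hE, hL⟩ := hsub habc
  exact not_exists_epsFree_langAlt_eq_abcLang ⟨M, hS, hE, hL⟩

end IETW
end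

section
/- Every language accepted by an IETWGFA under even computation consists only of even-length strings; moreover, this inclusion into the family of even-length-string languages is strict. -/
namespace IETW

variable {T : Type}

/-!
A move `uαv ⇒ uqv` shortens the configuration by exactly the number of symbols it reads, so an
accepting computation on `uv` reads `|uv|` symbols in total; in an even computation the moves come
in pairs reading equally many symbols, so that total is even. Strictness is a counting argument:
up to renaming states an automaton is a finite piece of data over `List T`, so there are at most
`#(List T)` languages `L(M)_even`, while the even-length words alone carry `2 ^ #(List T)`
languages.
-/

open Cardinal

section CardinalBounds

universe u

variable {α β : Type u} {κ : Cardinal.{u}}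

theorem mk_le_of_finite_of_aleph0_le [Finite α] (hκ : ℵ₀ ≤ κ) : #α ≤ κ :=
  mk_le_aleph0.trans hκ

theorem mk_prod_le_of_le (hκ : ℵ₀ ≤ κ) (hα : #α ≤ κ) (hβ : #β ≤ κ) :
    #(α × β) ≤ κ := by
  simpa using mul_le_of_le hκ hα hβ

theorem mk_finset_le_of_le (hκ : ℵ₀ ≤ κ) (hα : #α ≤ κ) : #(Finset α) ≤ κ := by
  classical
  exact (mk_le_of_surjective List.toFinset_surjective).trans
    ((mk_list_le_max α).trans (max_le hκ hα))

end CardinalBounds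

theorem _root_.List.append_self_injective {α : Type*} :
    Function.Injective fun l : List α => l ++ l := by
  intro l l' h
  have hlen : l.length = l'.length := by
    have := congrArg List.length h
    simp only [List.length_append] at this
    omega
  exact (List.append_inj h hlen).1

theorem _root_.List.even_sum_of_getD_two_mul_eq :
    ∀ {l : List ℕ}, Even l.length →
      (∀ i, 2 * i + 1 < l.length → l.getD (2 * i) 0 = l.getD (2 * i + 1) 0) → Even l.sum
  | [], _, _ => Even.zero
  | [_], hl, _ => by simp at hl
  | a :: b :: l, hl, hpairs => by
    have hab : a = b := hpairs 0 (by simp)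
    have hl' : Even l.sum := List.even_sum_of_getD_two_mul_eq
      (by simpa [Nat.even_add_one] using hl)
      (fun i hi => by simpa [Nat.mul_add] using hpairs (i + 1) (by simp only [List.length_cons]; omega))
    rw [List.sum_cons, List.sum_cons, ← add_assoc, hab]
    exact (Even.add_self b).add hl'

theorem EvenTrace.even_sum {ls : List (Bool × ℕ)} (h : EvenTrace ls) :
    Even (ls.map Prod.snd).sum := by
  obtain ⟨hlen, -, hpairs⟩ := h
  refine List.even_sum_of_getD_two_mul_eq (by simpa [Nat.even_iff] using hlen) fun i hi => ?_
  change (ls.map Prod.snd).getD _ (true, 0).2 = (ls.map Prod.snd).getD _ (true, 0).2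
  rw [List.getD_map, List.getD_map]
  exact hpairs i (by simpa using hi)

namespace GFA

variable {M N : GFA T}

theorem Step.length_add_length {c c' : List T × M.Q × List T} {l : Bool × ℕ}
    (h : M.Step c l c') :
    c.1.length + c.2.2.length = l.2 + (c'.1.length + c'.2.2.length) := by
  cases h <;> simp <;> omega

theorem Chain.length_add_length {c c' : List T × M.Q × List T} {ls : List (Bool × ℕ)}
    (h : M.Chain c ls c') :
    c.1.length + c.2.2.length = (ls.map Prod.snd).sum + (c'.1.length + c'.2.2.length) := by
  induction h with
  | nil => simp
  | cons hs _ ih =>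
    rw [List.map_cons, List.sum_cons, hs.length_add_length, ih]
    omega

theorem even_length_of_mem_langEven {w : List T} (hw : w ∈ M.langEven) : Even w.length := by
  obtain ⟨x, y, ls, f, rfl, -, hls, hc⟩ := hw
  simpa [hc.length_add_length] using hls.even_sum

theorem Chain.map (f : M.Q → N.Q)
    (hL : ∀ x q p, (x, q, p) ∈ M.ruleL → (x, f q, f p) ∈ N.ruleL)
    (hR : ∀ q x p, (q, x, p) ∈ M.ruleR → (f q, x, f p) ∈ N.ruleR)
    {c c' : List T × M.Q × List T} {ls : List (Bool × ℕ)} (h : M.Chain c ls c') :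
    N.Chain (c.1, f c.2.1, c.2.2) ls (c'.1, f c'.2.1, c'.2.2) := by
  induction h with
  | nil => exact .nil _
  | cons hs _ ih =>
    refine .cons ?_ ih
    cases hs with
    | left h => exact .left (hL _ _ _ h)
    | right h => exact .right (hR _ _ _ h)

theorem langEven_subset_of_map (f : M.Q → N.Q) (hstart : f M.start = N.start)
    (haccept : ∀ q ∈ M.accept, f q ∈ N.accept)
    (hL : ∀ x q p, (x, q, p) ∈ M.ruleL → (x, f q, f p) ∈ N.ruleL)
    (hR : ∀ q x p, (q, x, p) ∈ M.ruleR → (f q, x, f p) ∈ N.ruleR) :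
    M.langEven ⊆ N.langEven := by
  rintro _ ⟨x, y, ls, q, rfl, hq, hls, hc⟩
  exact ⟨x, y, ls, f q, rfl, haccept q hq, hls, hstart ▸ hc.map f hL hR⟩

theorem langEven_eq_of_equiv (e : M.Q ≃ N.Q) (hstart : e M.start = N.start)
    (haccept : ∀ q, e q ∈ N.accept ↔ q ∈ M.accept)
    (hL : ∀ x q p, (x, e q, e p) ∈ N.ruleL ↔ (x, q, p) ∈ M.ruleL)
    (hR : ∀ q x p, (e q, x, e p) ∈ N.ruleR ↔ (q, x, p) ∈ M.ruleR) :
    M.langEven = N.langEven := by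
  refine (langEven_subset_of_map e hstart (fun q => (haccept q).2) (fun x q p => (hL x q p).2)
    (fun q x p => (hR q x p).2)).antisymm
    (langEven_subset_of_map e.symm (by rw [← hstart, e.symm_apply_apply]) ?_ ?_ ?_)
  · intro q hq
    rwa [← haccept, e.apply_symm_apply]
  · intro x q p h
    rwa [← hL, e.apply_symm_apply, e.apply_symm_apply]
  · intro q x p h
    rwa [← hR, e.apply_symm_apply, e.apply_symm_apply]

end GFA

/-- `GFA T` lives in `Type 1`; automata on the state sets `Fin n` form a set-sized family
that realizes every language `L(M)_even`. -/
abbrev Code (T : Type) : Type :=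
  Σ n : ℕ, Fin n × Set (Fin n) × Finset (List T × Fin n × Fin n) ×
    Finset (Fin n × List T × Fin n)

def Code.toGFA : Code T → GFA T
  | ⟨n, s, F, RL, RR⟩ =>
    { Q := Fin n, finQ := inferInstance, start := s, accept := F,
      ruleL := RL, ruleR := RR, finL := RL.finite_toSet, finR := RR.finite_toSet }

theorem GFA.exists_code_langEven_eq (M : GFA T) :
    ∃ c : Code T, c.toGFA.langEven = M.langEven := by
  have := M.finQ
  obtain ⟨n, ⟨e⟩⟩ := Finite.exists_equiv_fin M.Q
  let eL : List T × M.Q × M.Q ≃ List T × Fin n × Fin n :=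
    (Equiv.refl _).prodCongr (e.prodCongr e)
  let eR : M.Q × List T × M.Q ≃ Fin n × List T × Fin n :=
    e.prodCongr ((Equiv.refl _).prodCongr e)
  refine ⟨⟨n, e M.start, e.symm ⁻¹' M.accept, M.finL.toFinset.map eL.toEmbedding,
    M.finR.toFinset.map eR.toEmbedding⟩,
    GFA.langEven_eq_of_equiv e.symm (e.symm_apply_apply _) (fun _ => Iff.rfl) ?_ ?_⟩
  · exact fun x q p => ((Finset.mem_coe.trans
      (Finset.mem_map_equiv (f := eL) (b := (x, q, p)))).trans M.finL.mem_toFinset).symm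
  · exact fun q x p => ((Finset.mem_coe.trans
      (Finset.mem_map_equiv (f := eR) (b := (q, x, p)))).trans M.finR.mem_toFinset).symm

theorem Code.mk_le [Nonempty T] : #(Code T) ≤ #(List T) := by
  have hκ : ℵ₀ ≤ #(List T) := aleph0_le_mk _
  have hfin {α : Type} [Finite α] : #α ≤ #(List T) := mk_le_of_finite_of_aleph0_le hκ
  have hruleL {α : Type} [Finite α] : #(Finset (List T × α)) ≤ #(List T) :=
    mk_finset_le_of_le hκ (mk_prod_le_of_le hκ le_rfl hfin)
  have hruleR {α β : Type} [Finite α] [Finite β] :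
      #(Finset (α × List T × β)) ≤ #(List T) :=
    mk_finset_le_of_le hκ (mk_prod_le_of_le hκ hfin (mk_prod_le_of_le hκ le_rfl hfin))
  calc #(Code T) = sum fun n => #(Fin n × Set (Fin n) × Finset (List T × Fin n × Fin n) ×
        Finset (Fin n × List T × Fin n)) := mk_sigma _
    _ ≤ sum fun _ : ℕ => #(List T) := sum_le_sum _ _ fun n =>
        mk_prod_le_of_le hκ hfin (mk_prod_le_of_le hκ hfin
          (mk_prod_le_of_le hκ hruleL hruleR))
    _ = ℵ₀ * #(List T) := by simp
    _ ≤ #(List T) := mul_le_of_le hκ hκ le_rfl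

theorem mk_langEven_range_le [Nonempty T] :
    #{L : Set (List T) | ∃ M : GFA T, M.langEven = L} ≤ #(List T) := by
  have hrange : {L : Set (List T) | ∃ M : GFA T, M.langEven = L} =
      Set.range fun c : Code T => c.toGFA.langEven := by
    ext L
    constructor
    · rintro ⟨M, rfl⟩
      exact M.exists_code_langEven_eq
    · rintro ⟨c, rfl⟩
      exact ⟨c.toGFA, rfl⟩
  rw [hrange]
  exact mk_range_le.trans Code.mk_le

theorem mk_set_le_mk_evenLength :
    #(Set (List T)) ≤ #{L : Set (List T) | ∀ w ∈ L, Even w.length} := by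
  refine mk_le_of_injective (f := fun S => ⟨(fun w => w ++ w) '' S, ?_⟩) fun S S' h =>
    Set.image_injective.2 List.append_self_injective (congrArg Subtype.val h)
  rintro _ ⟨w, -, rfl⟩
  simp

theorem even_family_ssubset_evenLength (T : Type) [Nonempty T] :
    {L : Set (List T) | ∃ M : GFA T, M.langEven = L} ⊂
      {L : Set (List T) | ∀ w ∈ L, Even w.length} := by
  refine ⟨fun L ⟨M, hM⟩ w hw => M.even_length_of_mem_langEven (hM ▸ hw), fun hsup => ?_⟩
  have hle : #(Set (List T)) ≤ #(List T) :=
    calc #(Set (List T)) ≤ #{L : Set (List T) | ∀ w ∈ L, Even w.length} :=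
          mk_set_le_mk_evenLength
      _ ≤ #{L : Set (List T) | ∃ M : GFA T, M.langEven = L} := mk_le_mk_of_subset hsup
      _ ≤ #(List T) := mk_langEven_range_le
  exact (mk_set ▸ cantor #(List T)).not_ge hle

end IETW
end

section
/- For every IETWGFA M, there exists an even linear grammar G such that L(G) = L(M)_init-even. -/
namespace IETW

variable {T : Type}

/-!
The grammar simulates `M` backwards, the sentential form `u ⟨q, d⟩ v` standing for the
configuration `(u, q, v)`. An even computation is a sequence of pairs of moves reading equally
many symbols, and alternation forces every pair to start in the same direction `d`. A pair
erasing `a` on the left and `b` on the right becomes the rule `⟨p', d⟩ → a ⟨q, d⟩ b`, which is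
even because `|a| = |b|`; derivations start from an accepting state with empty sides, and the
initial move, which is unconstrained, becomes a terminal rule `⟨q, d⟩ → x`.
-/

open Relation

theorem GFA.Step.exists_ruleL {M : GFA T} {x y : List T} {q : M.Q} {n c}
    (h : M.Step (x, q, y) (true, n) c) :
    ∃ u a p, (a, q, p) ∈ M.ruleL ∧ n = a.length ∧ x = u ++ a ∧ c = (u, p, y) := by
  cases h with | left h => exact ⟨_, _, _, h, rfl, rfl, rfl⟩

theorem GFA.Step.exists_ruleR {M : GFA T} {x y : List T} {q : M.Q} {n c}
    (h : M.Step (x, q, y) (false, n) c) :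
    ∃ v b p, (q, b, p) ∈ M.ruleR ∧ n = b.length ∧ y = b ++ v ∧ c = (x, p, v) := by
  cases h with | right h => exact ⟨_, _, _, h, rfl, rfl, rfl⟩

theorem GFA.chain_nil_iff {M : GFA T} {c c'} : M.Chain c [] c' ↔ c = c' :=
  ⟨fun h => by cases h; rfl, fun h => h ▸ .nil c⟩

theorem GFA.chain_cons_iff {M : GFA T} {c c'' l ls} :
    M.Chain c (l :: ls) c'' ↔ ∃ c', M.Step c l c' ∧ M.Chain c' ls c'' :=
  ⟨fun h => by cases h with | cons h h' => exact ⟨_, h, h'⟩, fun ⟨_, h, h'⟩ => .cons h h'⟩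

inductive PairTrace (d : Bool) : List (Bool × ℕ) → Prop
  | nil : PairTrace d []
  | cons (n : ℕ) {ls : List (Bool × ℕ)} (h : PairTrace d ls) :
      PairTrace d ((d, n) :: (!d, n) :: ls)

theorem alternating_cons_cons {a b : Bool × ℕ} {l : List (Bool × ℕ)} :
    Alternating (a :: b :: l) ↔ a.1 ≠ b.1 ∧ Alternating (b :: l) :=
  List.isChain_cons_cons

theorem evenTrace_cons_cons {a b : Bool × ℕ} {l : List (Bool × ℕ)} :
    EvenTrace (a :: b :: l) ↔ a.2 = b.2 ∧ Alternating (a :: b :: l) ∧ EvenTrace l := by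
  constructor
  · rintro ⟨hlen, halt, hpair⟩
    refine ⟨hpair 0 (by simp), halt, by simp at hlen; omega, halt.tail.tail, fun i hi => ?_⟩
    simpa [Nat.mul_succ] using hpair (i + 1) (by simp; omega)
  · rintro ⟨hab, halt, hlen, -, hpair⟩
    refine ⟨by simp; omega, halt, fun i hi => ?_⟩
    cases i with
    | zero => simpa using hab
    | succ i => simpa [Nat.mul_succ] using hpair i (by simp at hi; omega)

theorem PairTrace.evenTrace {d : Bool} {ls : List (Bool × ℕ)} (h : PairTrace d ls) :
    EvenTrace ls := by
  induction h with
  | nil => exact ⟨rfl, List.isChain_nil, by simp⟩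
  | cons _ h ih =>
    refine evenTrace_cons_cons.2 ⟨rfl, ?_, ih⟩
    cases h with
    | nil => exact alternating_cons_cons.2 ⟨by simp, List.isChain_singleton _⟩
    | cons _ _ =>
      exact alternating_cons_cons.2 ⟨by simp, alternating_cons_cons.2 ⟨by simp, ih.2.1⟩⟩

theorem pairTrace_of_evenTrace {d : Bool} :
    ∀ {ls : List (Bool × ℕ)}, EvenTrace ls → (∀ a ∈ ls.head?, a.1 = d) → PairTrace d ls
  | [], _, _ => .nil
  | [_], h, _ => by simp [EvenTrace] at h
  | (d₁, n₁) :: (d₂, n₂) :: ls, h, hd => by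
    obtain ⟨rfl, halt, hls⟩ := evenTrace_cons_cons.1 h
    obtain rfl : d₁ = d := by simpa using hd
    obtain ⟨h₁₂, halt⟩ := alternating_cons_cons.1 halt
    obtain rfl : d₂ = !d₁ := by cases d₁ <;> simpa using h₁₂.symm
    refine .cons n₁ (pairTrace_of_evenTrace hls fun a ha => ?_)
    cases ls with
    | nil => simp at ha
    | cons b ls =>
      obtain rfl : b = a := by simpa using ha
      have := (alternating_cons_cons.1 halt).1
      cases d₁ <;> simpa using this.symm

theorem evenTrace_iff_exists_pairTrace {ls : List (Bool × ℕ)} :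
    EvenTrace ls ↔ ∃ d, PairTrace d ls := by
  refine ⟨fun h => ?_, fun ⟨_, h⟩ => h.evenTrace⟩
  cases ls with
  | nil => exact ⟨true, .nil⟩
  | cons a ls => exact ⟨a.1, pairTrace_of_evenTrace h (by simp)⟩

/-- The nonterminal `some (q, d)` is `⟨q, d⟩` above, and `none` is the start symbol. -/
inductive GFA.InitEvenRule (M : GFA T) :
    Option (M.Q × Bool) × List T × Option (Option (M.Q × Bool) × List T) → Prop
  | accept {f : M.Q} (d : Bool) (hf : f ∈ M.accept) :
      GFA.InitEvenRule M (none, [], some (some (f, d), []))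
  | leftRight {a b : List T} {q p p' : M.Q} (hL : (a, q, p) ∈ M.ruleL)
      (hR : (p, b, p') ∈ M.ruleR) (hab : a.length = b.length) :
      GFA.InitEvenRule M (some (p', true), a, some (some (q, true), b))
  | rightLeft {a b : List T} {q p p' : M.Q} (hR : (q, b, p) ∈ M.ruleR)
      (hL : (a, p, p') ∈ M.ruleL) (hab : a.length = b.length) :
      GFA.InitEvenRule M (some (p', false), a, some (some (q, false), b))
  | initLeft {a : List T} {q : M.Q} (d : Bool) (h : (a, M.start, q) ∈ M.ruleL) :
      GFA.InitEvenRule M (some (q, d), a, none)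
  | initRight {b : List T} {q : M.Q} (d : Bool) (h : (M.start, b, q) ∈ M.ruleR) :
      GFA.InitEvenRule M (some (q, d), b, none)

theorem GFA.initEvenRule_finite (M : GFA T) : {r | M.InitEvenRule r}.Finite := by
  have := M.finQ
  let W : Set (List T) := insert [] ((·.1) '' M.ruleL ∪ (·.2.1) '' M.ruleR)
  have hW : W.Finite := ((M.finL.image _).union (M.finR.image _)).insert []
  refine (Set.finite_univ.prod
    (hW.prod (((Set.finite_univ.prod hW).image some).insert none))).subset ?_
  rintro _ (_ | _ | _ | _ | _)
  all_goals simp only [W]; aesop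

def GFA.initEvenGrammar (M : GFA T) : LG T where
  N := Option (M.Q × Bool)
  finN := have := M.finQ; inferInstance
  start := none
  rules := {r | M.InitEvenRule r}
  finR := M.initEvenRule_finite

theorem GFA.initEvenGrammar_derives_of_chain {M : GFA T} {d : Bool} {ls : List (Bool × ℕ)}
    (hp : PairTrace d ls) {u v u₀ v₀ : List T} {q f : M.Q} (hc : M.Chain (u, q, v) ls (u₀, f, v₀)) :
    ReflTransGen M.initEvenGrammar.Der (u₀, some (f, d), v₀) (u, some (q, d), v) := by
  induction hp generalizing u q v with
  | nil => cases GFA.chain_nil_iff.1 hc; rfl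
  | cons _ _ ih =>
    obtain ⟨_, hs₁, _, hs₂, hc⟩ :
        ∃ c₁, M.Step _ _ c₁ ∧ ∃ c₂, M.Step c₁ _ c₂ ∧ M.Chain c₂ _ _ := by
      simpa only [GFA.chain_cons_iff] using hc
    cases d with
    | true =>
      obtain ⟨u, a, p, hL, rfl, rfl, rfl⟩ := hs₁.exists_ruleL
      obtain ⟨v, b, p', hR, hab, rfl, rfl⟩ := hs₂.exists_ruleR
      exact (ih hc).tail (.step (.leftRight hL hR hab))
    | false =>
      obtain ⟨v, b, p, hR, rfl, rfl, rfl⟩ := hs₁.exists_ruleR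
      obtain ⟨u, a, p', hL, hab, rfl, rfl⟩ := hs₂.exists_ruleL
      exact (ih hc).tail (.step (.rightLeft hR hL hab.symm))

theorem GFA.exists_chain_of_initEvenGrammar_derives {M : GFA T} {u₀ v₀ : List T} {f : M.Q}
    {d : Bool} {c : List T × Option (M.Q × Bool) × List T}
    (h : ReflTransGen M.initEvenGrammar.Der (u₀, some (f, d), v₀) c) :
    ∃ u q v, c = (u, some (q, d), v) ∧
      ∃ ls, PairTrace d ls ∧ M.Chain (u, q, v) ls (u₀, f, v₀) := by
  induction h with
  | refl => exact ⟨_, _, _, rfl, [], .nil, .nil _⟩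
  | tail _ hstep ih =>
    obtain ⟨u, q, v, rfl, ls, hp, hc⟩ := ih
    obtain @⟨_, _, a, b, _, _, hr⟩ := hstep
    cases hr with
    | leftRight hL hR hab =>
      refine ⟨_, _, _, rfl, _, .cons a.length hp, ?_⟩
      exact .cons (.left hL) (hab ▸ .cons (.right hR) hc)
    | rightLeft hR hL hab =>
      refine ⟨_, _, _, rfl, _, .cons b.length hp, ?_⟩
      exact .cons (.right hR) (hab ▸ .cons (.left hL) hc)

theorem GFA.initEvenGrammar_derives_iff {M : GFA T} {u v : List T} {q : M.Q} {d : Bool} :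
    ReflTransGen M.initEvenGrammar.Der ([], none, []) (u, some (q, d), v) ↔
      ∃ f ∈ M.accept, ∃ ls, PairTrace d ls ∧ M.Chain (u, q, v) ls ([], f, []) := by
  constructor
  · intro h
    obtain h | ⟨_, @⟨_, _, _, _, _, _, hr⟩, h⟩ := h.cases_head
    · cases h
    cases hr with
    | accept _ hf =>
      obtain ⟨_, _, _, ⟨⟩, ls, hp, hc⟩ := GFA.exists_chain_of_initEvenGrammar_derives h
      exact ⟨_, hf, ls, hp, hc⟩
  · rintro ⟨f, hf, ls, hp, hc⟩
    exact .head (.step (u := []) (v := []) (.accept d hf))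
      (GFA.initEvenGrammar_derives_of_chain hp hc)

theorem GFA.initEvenGrammar_lang (M : GFA T) : M.initEvenGrammar.lang = M.langInitEven := by
  ext w
  constructor
  · rintro ⟨u, A, v, x, hder, hterm, rfl⟩
    cases hterm with
    | initLeft d h =>
      obtain ⟨f, hf, ls, hp, hc⟩ := initEvenGrammar_derives_iff.1 hder
      exact ⟨u ++ x, v, _, f, rfl, hf, ⟨_, ls, rfl, hp.evenTrace⟩, .cons (.left h) hc⟩
    | initRight d h =>
      obtain ⟨f, hf, ls, hp, hc⟩ := initEvenGrammar_derives_iff.1 hder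
      exact ⟨u, x ++ v, _, f, List.append_assoc .., hf, ⟨_, ls, rfl, hp.evenTrace⟩,
        .cons (.right h) hc⟩
  · rintro ⟨x, y, _, f, rfl, hf, ⟨⟨dir, _⟩, ls, rfl, hev⟩, hc⟩
    obtain ⟨d, hp⟩ := evenTrace_iff_exists_pairTrace.1 hev
    obtain ⟨_, hs, hc⟩ := GFA.chain_cons_iff.1 hc
    cases dir with
    | true =>
      obtain ⟨u, a, q, hL, rfl, rfl, rfl⟩ := hs.exists_ruleL
      exact ⟨u, some (q, d), y, a, initEvenGrammar_derives_iff.2 ⟨f, hf, ls, hp, hc⟩,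
        .initLeft d hL, rfl⟩
    | false =>
      obtain ⟨v, b, q, hR, rfl, rfl, rfl⟩ := hs.exists_ruleR
      exact ⟨x, some (q, d), v, b, initEvenGrammar_derives_iff.2 ⟨f, hf, ls, hp, hc⟩,
        .initRight d hR, (List.append_assoc ..).symm⟩

theorem GFA.initEvenGrammar_even (M : GFA T) : M.initEvenGrammar.Even := by
  rintro _ (_ | ⟨-, -, hab⟩ | ⟨-, -, hab⟩ | _ | _) B y ⟨⟩ <;> first | rfl | exact hab

theorem initeven_ietwgfa_to_elg {T : Type} (M : GFA T) :
    ∃ G : LG T, G.Even ∧ G.lang = M.langInitEven :=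
  ⟨M.initEvenGrammar, M.initEvenGrammar_even, M.initEvenGrammar_lang⟩

end IETW
end
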